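/- Let X be a finite set of cardinality N, and let E be an exponential family on X with extended tangent space T of dimension dim T = ⌈N/2⌉ (so E has dimension ⌈N/2⌉ − 1) such that sup_P inf_{Q∈E} D(P‖Q) = log 2. If E contains the uniform distribution on X, then there exists a partition of X such that E equals the set of all strictly positive probability distributions on X that are constant on each block of the partition. -/

import Mathlib

open scoped BigOperators Classical

noncomputable section

variable {X : Type*}

/-- A probability distribution on a finite set `X`. -/
def IsProb [Fintype X] (P : X → ℝ) : Prop :=
  (∀ x, 0 ≤ P x) ∧ ∑ x, P x = 1

/-- Information divergence `D(P‖Q)` with values in `EReal`, equal to `⊤` if the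
support of `P` is not contained in the support of `Q`.  (The convention
`0 · log 0 = 0` holds automatically since `Real.log 0 = 0`.) -/
def KL [Fintype X] (P Q : X → ℝ) : EReal :=
  if ∀ x, Q x = 0 → P x = 0 then ((∑ x, P x * Real.log (P x / Q x) : ℝ) : EReal) else ⊤

/-- The exponential family with strictly positive reference measure `ν` and extended
tangent space `T` (a subspace of `ℝ^X` containing the constants): the set of strictly
positive probability distributions `P` with `log (P/ν) ∈ T`. -/
def expFam [Fintype X] (ν : X → ℝ) (T : Submodule ℝ (X → ℝ)) : Set (X → ℝ) :=
  {P | (∀ x, 0 < P x) ∧ ∑ x, P x = 1 ∧ (fun x => Real.log (P x / ν x)) ∈ T}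

/-- `sup_P inf_{Q ∈ E} D(P‖Q)`, supremum over all probability distributions `P`. -/
def maxDiv [Fintype X] (E : Set (X → ℝ)) : EReal :=
  ⨆ P ∈ {P : X → ℝ | IsProb P}, ⨅ Q ∈ E, KL P Q

/-- The orthogonal complement of `T` in `ℝ^X` w.r.t. the standard inner product
(the normal space of the exponential family with extended tangent space `T`). -/
def orthSpace [Fintype X] (T : Submodule ℝ (X → ℝ)) : Set (X → ℝ) :=
  {u | ∀ t ∈ T, ∑ x, u x * t x = 0}

/-- A circuit vector of a set `N ⊆ ℝ^X`: a nonzero element whose support is minimal,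
i.e. every `u ∈ N` with `supp u ⊆ supp v` is a scalar multiple of `v`. -/
def IsCircuitVector (N : Set (X → ℝ)) (v : X → ℝ) : Prop :=
  v ∈ N ∧ v ≠ 0 ∧ ∀ u ∈ N, Function.support u ⊆ Function.support v → ∃ α : ℝ, u = α • v

/-- A circuit of `N`: the support of a circuit vector. -/
def IsCircuit (N : Set (X → ℝ)) (σ : Set X) : Prop :=
  ∃ v, IsCircuitVector N v ∧ σ = Function.support v

/-- The closed partition model of the partition given by the equivalence relation `r`:
all probability distributions constant on each block. -/
def partModel [Fintype X] (r : X → X → Prop) : Set (X → ℝ) :=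
  {Q | IsProb Q ∧ ∀ x y, r x y → Q x = Q y}

/-- The partition exponential family of the partition given by the equivalence
relation `r`: all strictly positive probability distributions constant on each block. -/
def partExpFam [Fintype X] (r : X → X → Prop) : Set (X → ℝ) :=
  {P | (∀ x, 0 < P x) ∧ ∑ x, P x = 1 ∧ ∀ x y, r x y → P x = P y}

/-- The set `X̲` of points not annihilated by all of `N`. -/
def underlineSet (N : Set (X → ℝ)) : Set X := {x | ∃ v ∈ N, v x ≠ 0}

/-- The relation `x ∼ y` : every `v ∈ N` with `v x ≠ 0` has `v y ≠ 0`. -/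
def coRel (N : Set (X → ℝ)) (x y : X) : Prop := ∀ v ∈ N, v x ≠ 0 → v y ≠ 0

/-- `Z` is an equivalence class of `∼` on `X̲`. -/
def IsClassOf (N : Set (X → ℝ)) (Z : Set X) : Prop :=
  ∃ x ∈ underlineSet N, Z = {y | coRel N x y}

end

/-!
Let `D` be the orthogonal complement of `T`, of dimension `⌊N/2⌋`; as the uniform distribution
lies in `E`, `log Q ⟂ D` for all `Q ∈ E`. For `0 ≠ v ∈ D`, Gibbs' inequality on the supports of
`v⁺` and `v⁻` bounds the divergence of `P = v⁺ / ∑ v⁺` from every `Q ∈ E` below by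
`log (1 + exp (φ(v) / ∑ v⁺))`, where `φ(v) = ∑ v log |v|`. So `maxDiv E = log 2` forces `φ ≤ 0`
on `D`, hence `φ = 0` as `φ` is odd.

Differentiating `t ↦ φ(v + t w) = 0` gives `∑ w log |v + t w| = 0` for all but finitely many `t`.
At a zero `t₀` of some `v x + t w x` this sum has a logarithmic singularity whose coefficient is
the sum of `w x` over the zeros `x` of `v + t₀ w`, so that coefficient vanishes. A generic choice
of `w` then shows that every coordinate in the support of `D` is proportional, on `D`, to another.

The proportionality classes therefore have at least two points, and evaluation at one point per
class is injective on `D`. Counting dimensions, there are exactly `dim D` classes, of two or three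
points each, and `D` has a basis dual to the chosen points. Such a basis vector `w` lives on one
class and satisfies `∑ w = φ(w) = 0`, which excludes three points and makes `w = e_a - e_b`. So
`D` is spanned by vectors `e_a - e_b ∈ D`, and `E` consists of the positive distributions that are
constant on the blocks of the equivalence relation `e_a - e_b ∈ D`.
-/

open Finset Real Filter Topology

section NormalSpace

variable {X : Type*} [Fintype X]

def normalSpace (T : Submodule ℝ (X → ℝ)) : Submodule ℝ (X → ℝ) :=
  LinearMap.BilinForm.orthogonal (dotProductBilin ℝ ℝ) T

lemma mem_normalSpace {T : Submodule ℝ (X → ℝ)} {v : X → ℝ} :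
    v ∈ normalSpace T ↔ ∀ t ∈ T, t ⬝ᵥ v = 0 :=
  Iff.rfl

lemma dotProductBilin_isRefl :
    (dotProductBilin ℝ ℝ : LinearMap.BilinForm ℝ (X → ℝ)).IsRefl :=
  fun v w h => by simpa [dotProduct_comm] using h

lemma dotProductBilin_nondegenerate :
    (dotProductBilin ℝ ℝ : LinearMap.BilinForm ℝ (X → ℝ)).Nondegenerate :=
  ⟨fun v h => dotProduct_self_eq_zero.mp (h v), fun v h => dotProduct_self_eq_zero.mp (h v)⟩

lemma mem_iff_forall_normalSpace {T : Submodule ℝ (X → ℝ)} {t : X → ℝ} :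
    t ∈ T ↔ ∀ v ∈ normalSpace T, v ⬝ᵥ t = 0 := by
  conv_lhs => rw [← LinearMap.BilinForm.orthogonal_orthogonal dotProductBilin_nondegenerate
    dotProductBilin_isRefl T]
  exact Iff.rfl

lemma finrank_normalSpace (T : Submodule ℝ (X → ℝ)) :
    Module.finrank ℝ (normalSpace T) = Fintype.card X - Module.finrank ℝ T := by
  rw [normalSpace, LinearMap.BilinForm.finrank_orthogonal dotProductBilin_nondegenerate,
    Module.finrank_fintype_fun_eq_card]

end NormalSpace

section Divergence

variable {X : Type*} [Fintype X]

lemma sum_mul_log_div_eq {p q : X → ℝ} (hq : ∀ x, q x ≠ 0) :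
    ∑ x, p x * log (p x / q x) = ∑ x, p x * log (p x) - ∑ x, p x * log (q x) := by
  rw [← sum_sub_distrib]
  refine sum_congr rfl fun x _ => ?_
  rcases eq_or_ne (p x) 0 with h | h
  · simp [h]
  · rw [log_div h (hq x)]
    ring

lemma KL_eq_sum_of_pos {P Q : X → ℝ} (hQ : ∀ x, 0 < Q x) :
    KL P Q = ((∑ x, P x * log (P x / Q x) : ℝ) : EReal) :=
  if_pos fun x hx => absurd hx (hQ x).ne'

lemma sum_filter_ne_zero_pos {p q : X → ℝ} (hp : IsProb p) (hq : ∀ x, 0 < q x) :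
    0 < ∑ x with p x ≠ 0, q x := by
  obtain ⟨x₀, -, hx₀⟩ := exists_ne_zero_of_sum_ne_zero (hp.2.symm ▸ one_ne_zero)
  exact sum_pos (fun x _ => hq x) ⟨x₀, by simpa using hx₀⟩

lemma neg_log_sum_le_sum_mul_log_div {p q : X → ℝ} (hp : IsProb p) (hq : ∀ x, 0 < q x) :
    -log (∑ x with p x ≠ 0, q x) ≤ ∑ x, p x * log (p x / q x) := by
  set s := ∑ x with p x ≠ 0, q x
  have hs : 0 < s := sum_filter_ne_zero_pos hp hq
  have key : ∀ x, p x - q x / s ≤ p x * log (p x / q x) + p x * log s := by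
    intro x
    rcases (hp.1 x).eq_or_lt with h | h
    · rw [← h]
      simpa using div_nonneg (hq x).le hs.le
    · have hlog := mul_le_mul_of_nonneg_left
        (log_le_sub_one_of_pos (show 0 < q x / (s * p x) by have := hq x; positivity)) h.le
      rw [log_div (hq x).ne' (by positivity), log_mul hs.ne' h.ne'] at hlog
      rw [log_div h.ne' (hq x).ne']
      have e : p x * (q x / (s * p x)) = q x / s := by field_simp
      nlinarith
  have hsum := sum_le_sum fun x (_ : x ∈ univ.filter (p · ≠ 0)) => key x
  rw [sum_sub_distrib, sum_add_distrib, ← sum_div, div_self hs.ne', ← sum_mul,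
    sum_filter_ne_zero, hp.2, sum_filter_of_ne fun x _ h => left_ne_zero_of_mul h] at hsum
  linarith

lemma log_one_add_exp_le {s t d δ : ℝ} (hs : 0 < s) (ht : 0 < t) (hst : s + t ≤ 1)
    (hds : -log s ≤ d) (hdt : δ - log t ≤ d) : log (1 + exp δ) ≤ d := by
  have es : exp (-d) ≤ s := by
    rw [← exp_log hs]
    exact exp_le_exp.mpr (by linarith)
  have et : exp δ * exp (-d) ≤ t := by
    rw [← exp_add, ← exp_log ht]
    exact exp_le_exp.mpr (by linarith)
  rw [log_le_iff_le_exp (by positivity), ← mul_le_mul_iff_of_pos_right (exp_pos (-d)),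
    ← exp_add, add_neg_cancel, exp_zero]
  linarith

lemma log_one_add_exp_le_maxDiv {E : Set (X → ℝ)}
    (hE : ∀ Q ∈ E, (∀ x, 0 < Q x) ∧ ∑ x, Q x = 1) {P P' : X → ℝ} (hP : IsProb P)
    (hP' : IsProb P') (hdisj : ∀ x, P x = 0 ∨ P' x = 0)
    (horth : ∀ Q ∈ E, ∑ x, P x * log (Q x) = ∑ x, P' x * log (Q x)) :
    ((log (1 + exp (∑ x, P x * log (P x) - ∑ x, P' x * log (P' x))) : ℝ) : EReal) ≤
      maxDiv E := by
  refine le_trans ?_ (le_iSup₂ (f := fun P (_ : P ∈ {P : X → ℝ | IsProb P}) =>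
    ⨅ Q ∈ E, KL P Q) P hP)
  refine le_iInf₂ fun Q hQE => ?_
  obtain ⟨hQ, hQ1⟩ := hE Q hQE
  rw [KL_eq_sum_of_pos hQ, EReal.coe_le_coe_iff]
  have hsupp : Disjoint (univ.filter (P · ≠ 0)) (univ.filter (P' · ≠ 0)) :=
    disjoint_filter.mpr fun x _ h h' => (hdisj x).elim h h'
  have hgibbs' := neg_log_sum_le_sum_mul_log_div hP' hQ
  refine log_one_add_exp_le (sum_filter_ne_zero_pos hP hQ) (sum_filter_ne_zero_pos hP' hQ) ?_
    (neg_log_sum_le_sum_mul_log_div hP hQ) ?_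
  · rw [← sum_union hsupp, ← hQ1]
    exact sum_le_sum_of_subset_of_nonneg (subset_univ _) fun x _ _ => (hQ x).le
  · rw [sum_mul_log_div_eq fun x => (hQ x).ne'] at hgibbs' ⊢
    linarith [horth Q hQE]

lemma posPart_mul_log_sub_negPart_mul_log (y : ℝ) :
    y⁺ * log y⁺ - y⁻ * log y⁻ = y * log y := by
  rcases le_total 0 y with h | h
  · simp [posPart_of_nonneg h, negPart_of_nonneg h]
  · simp [posPart_of_nonpos h, negPart_of_nonpos h, log_neg_eq_log]

lemma sum_mul_mul_log_mul {v : X → ℝ} (hv : ∑ x, v x = 0) (c : ℝ) :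
    ∑ x, c * v x * log (c * v x) = c * ∑ x, v x * log (v x) := by
  have h : ∀ x, c * v x * log (c * v x) = c * (v x * log (v x)) + v x * (c * log c) := by
    intro x
    have := negMulLog_mul c (v x)
    simp only [negMulLog] at this
    linarith
  simp only [h, sum_add_distrib, ← sum_mul, ← mul_sum, hv, zero_mul, add_zero]

lemma sum_mul_log_nonpos_of_sum_abs_eq_two {E : Set (X → ℝ)}
    (hE : ∀ Q ∈ E, (∀ x, 0 < Q x) ∧ ∑ x, Q x = 1) (hmax : maxDiv E ≤ ((log 2 : ℝ) : EReal))
    {u : X → ℝ} (hu : ∑ x, u x = 0) (hu_abs : ∑ x, |u x| = 2)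
    (huE : ∀ Q ∈ E, ∑ x, u x * log (Q x) = 0) :
    ∑ x, u x * log (u x) ≤ 0 := by
  obtain ⟨hpos, hneg⟩ : IsProb (fun x => (u x)⁺) ∧ IsProb (fun x => (u x)⁻) := by
    have h₁ : ∑ x, ((u x)⁺ + (u x)⁻) = 2 := by simp only [posPart_add_negPart, hu_abs]
    have h₂ : ∑ x, ((u x)⁺ - (u x)⁻) = 0 := by simp only [posPart_sub_negPart, hu]
    rw [sum_add_distrib] at h₁
    rw [sum_sub_distrib] at h₂
    exact ⟨⟨fun x => posPart_nonneg _, by linarith⟩, ⟨fun x => negPart_nonneg _, by linarith⟩⟩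
  have hdisj : ∀ x, (u x)⁺ = 0 ∨ (u x)⁻ = 0 := fun x =>
    (le_total 0 (u x)).symm.imp posPart_of_nonpos negPart_of_nonneg
  have horth : ∀ Q ∈ E, ∑ x, (u x)⁺ * log (Q x) = ∑ x, (u x)⁻ * log (Q x) := by
    intro Q hQ
    rw [← sub_eq_zero, ← sum_sub_distrib]
    simp only [← sub_mul, posPart_sub_negPart, huE Q hQ]
  have hbound := (log_one_add_exp_le_maxDiv hE hpos hneg hdisj horth).trans hmax
  rw [EReal.coe_le_coe_iff, ← sum_sub_distrib, log_le_log_iff (by positivity) two_pos] at hbound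
  simp only [posPart_mul_log_sub_negPart_mul_log] at hbound
  exact exp_le_one_iff.mp (by linarith)

lemma sum_mul_log_nonpos_of_maxDiv_le {E : Set (X → ℝ)}
    (hE : ∀ Q ∈ E, (∀ x, 0 < Q x) ∧ ∑ x, Q x = 1) (hmax : maxDiv E ≤ ((log 2 : ℝ) : EReal))
    {v : X → ℝ} (hv : ∑ x, v x = 0) (hvE : ∀ Q ∈ E, ∑ x, v x * log (Q x) = 0) :
    ∑ x, v x * log (v x) ≤ 0 := by
  rcases eq_or_ne v 0 with rfl | hv₀
  · simp
  set a := (∑ x, |v x|) / 2 with ha_def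
  have ha : 0 < a := by
    obtain ⟨x, hx⟩ := Function.ne_iff.mp hv₀
    exact half_pos ((abs_pos.mpr hx).trans_le
      (single_le_sum (fun y _ => abs_nonneg (v y)) (mem_univ x)))
  have hu : ∑ x, a⁻¹ * v x = 0 := by rw [← mul_sum, hv, mul_zero]
  have hu_abs : ∑ x, |a⁻¹ * v x| = 2 := by
    simp only [abs_mul, abs_inv, abs_of_pos ha, ← mul_sum]
    rw [inv_mul_eq_div, div_eq_iff ha.ne']
    linarith
  have hu_nonpos := sum_mul_log_nonpos_of_sum_abs_eq_two hE hmax hu hu_abs fun Q hQ => by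
    simp only [mul_assoc, ← mul_sum, hvE Q hQ, mul_zero]
  have hv_eq : v = fun x => a * (a⁻¹ * v x) :=
    funext fun x => (mul_inv_cancel_left₀ ha.ne' (v x)).symm
  rw [hv_eq, sum_mul_mul_log_mul hu]
  exact mul_nonpos_of_nonneg_of_nonpos ha.le hu_nonpos

lemma sum_mul_log_eq_zero_of_maxDiv_le {E : Set (X → ℝ)}
    (hE : ∀ Q ∈ E, (∀ x, 0 < Q x) ∧ ∑ x, Q x = 1) (hmax : maxDiv E ≤ ((log 2 : ℝ) : EReal))
    {v : X → ℝ} (hv : ∑ x, v x = 0) (hvE : ∀ Q ∈ E, ∑ x, v x * log (Q x) = 0) :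
    ∑ x, v x * log (v x) = 0 := by
  have hneg := sum_mul_log_nonpos_of_maxDiv_le hE hmax (v := -v) (by simp [hv])
    fun Q hQ => by simp [hvE Q hQ]
  simp only [Pi.neg_apply, log_neg_eq_log, neg_mul, sum_neg_distrib, neg_nonpos] at hneg
  exact (sum_mul_log_nonpos_of_maxDiv_le hE hmax hv hvE).antisymm hneg

end Divergence

lemma eq_zero_of_eventually_mul_log_add_eq_zero {c t₀ : ℝ} {g : ℝ → ℝ}
    (hg : ContinuousAt g t₀) (h : ∀ᶠ t in 𝓝[≠] t₀, c * log (t - t₀) + g t = 0) : c = 0 := by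
  by_contra hc
  have hexp : ∀ᶠ t in 𝓝[≠] t₀, exp (-g t / c) = |t - t₀| := by
    filter_upwards [h, self_mem_nhdsWithin] with t ht htne
    rw [← exp_log (abs_pos.mpr (sub_ne_zero.mpr htne)), log_abs]
    congr 1
    rw [div_eq_iff hc]
    linarith
  have hlim : Tendsto (fun t => |t - t₀|) (𝓝[≠] t₀) (𝓝 0) :=
    tendsto_nhdsWithin_of_tendsto_nhds
      ((continuous_abs.comp (continuous_sub_right t₀)).tendsto' t₀ 0 (by simp))
  exact (exp_pos _).ne' (tendsto_nhds_unique
    (((hg.neg.div_const c).rexp).tendsto.mono_left nhdsWithin_le_nhds)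
    (hlim.congr' (EventuallyEq.symm hexp)))

lemma Module.Dual.exists_forall_apply_ne_zero {K V ι : Type*} [Field K] [Infinite K]
    [AddCommGroup V] [Module K V] [Fintype ι] (f : ι → Module.Dual K V) :
    ∃ v, ∀ i, f i ≠ 0 → f i v ≠ 0 := by
  obtain ⟨v, -, hv⟩ := Set.exists_of_ssubset
    (Submodule.iUnion_ssubset_of_forall_ne_top_of_card_lt (univ : Finset {i // f i ≠ 0})
      (fun i => LinearMap.ker (f i)) (fun i => LinearMap.ker_eq_top.not.mpr i.2)
      (by rw [ENat.card_eq_top_of_infinite]; exact ENat.natCast_lt_top _))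
  exact ⟨v, by simpa using hv⟩

lemma mul_log_add_mul_log_ne_zero {l m : ℝ} (hl : l ≠ 0) (hm : m ≠ 0) (hlm : l + m = -1) :
    l * log l + m * log m ≠ 0 := by
  wlog hle : l ≤ m generalizing l m
  · rw [add_comm]
    exact this hm hl (by linarith) (by linarith)
  have hl' : 0 < -l := by linarith
  rw [← log_neg_eq_log l]
  rcases hm.lt_or_gt with hm | hm
  · have := log_neg hl' (by linarith)
    have := log_neg (neg_pos.mpr hm) (by linarith)
    rw [← log_neg_eq_log m]
    nlinarith
  · have := log_pos (show 1 < -l by linarith)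
    nlinarith [mul_lt_mul_of_pos_left (log_lt_log hm (show m < -l by linarith)) hm]

lemma le_three_of_two_le_of_sum_le {ι : Type*} {R : Finset ι} {n : ι → ℕ}
    (h2 : ∀ r ∈ R, 2 ≤ n r) (hsum : ∑ r ∈ R, n r ≤ 2 * #R + 1) {r : ι} (hr : r ∈ R) :
    n r ≤ 3 := by
  have hsplit : n r + ∑ i ∈ R.erase r, n i = ∑ i ∈ R, n i := add_sum_erase R n hr
  have hrest : (#R - 1) * 2 ≤ ∑ i ∈ R.erase r, n i := by
    simpa [card_erase_of_mem hr] using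
      card_nsmul_le_sum (R.erase r) n 2 fun i hi => h2 i (mem_of_mem_erase hi)
  have := card_pos.mpr ⟨r, hr⟩
  omega

section Relations

variable {X : Type*} {D : Submodule ℝ (X → ℝ)}

def ProportionalAt (D : Submodule ℝ (X → ℝ)) (a b : X) : Prop :=
  ∃ c ≠ 0, ∀ u ∈ D, u a = c * u b

lemma proportionalAt_equivalence : Equivalence (ProportionalAt D) where
  refl _ := ⟨1, one_ne_zero, fun u _ => (one_mul _).symm⟩
  symm := fun ⟨c, hc, h⟩ => ⟨c⁻¹, inv_ne_zero hc, fun u hu => by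
    rw [h u hu, inv_mul_cancel_left₀ hc]⟩
  trans := fun ⟨c, hc, h⟩ ⟨d, hd, h'⟩ => ⟨c * d, mul_ne_zero hc hd, fun u hu => by
    rw [h u hu, h' u hu, mul_assoc]⟩

def proportionalSetoid (D : Submodule ℝ (X → ℝ)) : Setoid X :=
  ⟨ProportionalAt D, proportionalAt_equivalence⟩

noncomputable def classRep (D : Submodule ℝ (X → ℝ)) (x : X) : X :=
  (Quotient.mk (proportionalSetoid D) x).out

lemma proportionalAt_classRep (x : X) : ProportionalAt D x (classRep D x) :=
  proportionalAt_equivalence.symm (Quotient.mk_out (s := proportionalSetoid D) x)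

lemma classRep_eq_of_proportionalAt {a b : X} (h : ProportionalAt D a b) :
    classRep D a = classRep D b :=
  congrArg Quotient.out (Quotient.sound h)

def BlockRel (D : Submodule ℝ (X → ℝ)) (a b : X) : Prop :=
  (Pi.single a 1 - Pi.single b 1 : X → ℝ) ∈ D

lemma blockRel_equivalence (D : Submodule ℝ (X → ℝ)) : Equivalence (BlockRel D) where
  refl _ := by simp [BlockRel]
  symm h := by simpa [BlockRel] using D.neg_mem h
  trans h h' := by simpa [BlockRel] using D.add_mem h h'

end Relations

section Restriction

variable {X : Type*} {D : Submodule ℝ (X → ℝ)} {R : Finset X}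

def evalOn (D : Submodule ℝ (X → ℝ)) (R : Finset X) : D →ₗ[ℝ] (R → ℝ) :=
  LinearMap.pi fun r => (LinearMap.proj (r : X)).comp D.subtype

lemma evalOn_injective (hR : ∀ u ∈ D, (∀ r ∈ R, u r = 0) → u = 0) :
    Function.Injective (evalOn D R) :=
  (injective_iff_map_eq_zero _).mpr fun ⟨u, hu⟩ h =>
    Subtype.ext (hR u hu fun r hr => congrFun h ⟨r, hr⟩)

lemma finrank_le_card_of_forall_eq_zero (hR : ∀ u ∈ D, (∀ r ∈ R, u r = 0) → u = 0) :
    Module.finrank ℝ D ≤ #R := by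
  simpa using LinearMap.finrank_le_finrank_of_injective (evalOn_injective hR)

lemma exists_mem_eqOn_single [Finite X] (hR : ∀ u ∈ D, (∀ r ∈ R, u r = 0) → u = 0)
    (hcard : #R ≤ Module.finrank ℝ D) {r : X} (hr : r ∈ R) :
    ∃ w ∈ D, ∀ r' ∈ R, w r' = (Pi.single r 1 : X → ℝ) r' := by
  have hsurj : Function.Surjective (evalOn D R) :=
    (LinearMap.injective_iff_surjective_of_finrank_eq_finrank (by
      simpa using (finrank_le_card_of_forall_eq_zero hR).antisymm hcard)).mp
      (evalOn_injective hR)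
  obtain ⟨⟨w, hw⟩, hwr⟩ := hsurj (Pi.single ⟨r, hr⟩ 1)
  refine ⟨w, hw, fun r' hr' => ?_⟩
  simpa [evalOn, Pi.single_apply, Subtype.ext_iff] using congrFun hwr ⟨r', hr'⟩

lemma le_span_of_forall_exists_eqOn_single (hR : ∀ u ∈ D, (∀ r ∈ R, u r = 0) → u = 0)
    {G : Set (X → ℝ)} (hGD : G ⊆ D)
    (hG : ∀ r ∈ R, ∃ w ∈ G, ∀ r' ∈ R, w r' = (Pi.single r 1 : X → ℝ) r') :
    D ≤ Submodule.span ℝ G := by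
  choose! w hwG hw using hG
  intro v hv
  have hdecomp : v - ∑ r ∈ R, v r • w r = 0 := by
    refine hR _ (D.sub_mem hv (D.sum_mem fun r hr => D.smul_mem _ (hGD (hwG r hr))))
      fun r' hr' => ?_
    simp only [Pi.sub_apply, Finset.sum_apply, Pi.smul_apply, smul_eq_mul]
    rw [sum_congr rfl fun r hr => by rw [hw r hr r' hr'], sum_eq_single_of_mem r' hr']
    · simp
    · intro r _ hne
      simp [Ne.symm hne]
  rw [sub_eq_zero.mp hdecomp]
  exact Submodule.sum_mem _ fun r hr => Submodule.smul_mem _ _ (Submodule.subset_span (hwG r hr))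

end Restriction

section VanishingEntropy

variable {X : Type*} [Fintype X] {D : Submodule ℝ (X → ℝ)}

lemma sum_mul_log_eq_zero_of_support_subset (hsum : ∀ u ∈ D, ∑ x, u x = 0)
    (hphi : ∀ u ∈ D, ∑ x, u x * log (u x) = 0) {v w : X → ℝ} (hv : v ∈ D) (hw : w ∈ D)
    (hvw : ∀ x, w x ≠ 0 → v x ≠ 0) : ∑ x, w x * log (v x) = 0 := by
  have hderiv : HasDerivAt (fun t : ℝ => ∑ x, (v x + t * w x) * log (v x + t * w x))
      (∑ x, w x * (log (v x) + 1)) 0 := by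
    refine HasDerivAt.fun_sum fun x _ => ?_
    rcases eq_or_ne (w x) 0 with hwx | hwx
    · simpa [hwx] using hasDerivAt_const (0 : ℝ) (v x * log (v x))
    · have hlin : HasDerivAt (fun t : ℝ => v x + t * w x) (w x) 0 := by
        simpa using ((hasDerivAt_id (0 : ℝ)).mul_const (w x)).const_add (v x)
      have := (hasDerivAt_mul_log (by simpa using hvw x hwx)).comp (0 : ℝ) hlin
      simpa [mul_comm, Function.comp_def] using this
  have hconst : (fun t : ℝ => ∑ x, (v x + t * w x) * log (v x + t * w x)) = fun _ => 0 :=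
    funext fun t => by simpa using hphi _ (D.add_mem hv (D.smul_mem t hw))
  rw [hconst] at hderiv
  have h := hderiv.unique (hasDerivAt_const 0 0)
  simpa only [mul_add, mul_one, sum_add_distrib, hsum w hw, add_zero] using h

lemma sum_filter_add_mul_eq_zero (hsum : ∀ u ∈ D, ∑ x, u x = 0)
    (hphi : ∀ u ∈ D, ∑ x, u x * log (u x) = 0) {v w : X → ℝ} (hv : v ∈ D) (hw : w ∈ D)
    (t₀ : ℝ) : ∑ x with w x ≠ 0 ∧ v x + t₀ * w x = 0, w x = 0 := by
  set A := univ.filter fun x => w x ≠ 0 ∧ v x + t₀ * w x = 0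
  set B := (univ.filter (w · ≠ 0)).image fun x => -v x / w x
  have hH : ∀ t ∉ B, ∑ x, w x * log (v x + t * w x) = 0 := by
    refine fun t ht => sum_mul_log_eq_zero_of_support_subset hsum hphi
      (D.add_mem hv (D.smul_mem t hw)) hw fun x hx h => ht (mem_image.mpr ⟨x, by simpa, ?_⟩)
    field_simp
    linarith
  -- near `t₀`, the points of `A` contribute a logarithmic singularity, the others a bounded term
  set g := fun t => ∑ x ∈ A, w x * log (w x) + ∑ x ∈ univ \ A, w x * log (v x + t * w x)
  have hg : ContinuousAt g t₀ := by
    refine continuousAt_const.add (tendsto_finsetSum _ fun x hx => ?_)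
    rcases eq_or_ne (w x) 0 with hwx | hwx
    · simp only [hwx, zero_mul]
      exact continuousAt_const
    · have hne : v x + t₀ * w x ≠ 0 := fun h => (mem_sdiff.mp hx).2 (by simp [A, hwx, h])
      exact continuousAt_const.mul
        ((by fun_prop : ContinuousAt (fun t => v x + t * w x) t₀).log hne)
  have hsplit : ∀ t ≠ t₀,
      ∑ x, w x * log (v x + t * w x) = (∑ x ∈ A, w x) * log (t - t₀) + g t := by
    intro t ht
    rw [← sum_sdiff (subset_univ A), sum_mul, add_comm, ← add_assoc, ← sum_add_distrib]
    congr 1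
    refine sum_congr rfl fun x hx => ?_
    obtain ⟨hwx, hx⟩ := (mem_filter.mp hx).2
    rw [show v x + t * w x = (t - t₀) * w x by linear_combination hx,
      log_mul (sub_ne_zero.mpr ht) hwx]
    ring
  refine eq_zero_of_eventually_mul_log_add_eq_zero hg ?_
  filter_upwards [B.eventually_cofinite_notMem.filter_mono (nhdsNE_le_cofinite t₀),
    self_mem_nhdsWithin] with t htB ht
  rw [← hsplit t ht, hH t htB]

lemma exists_ne_proportionalAt (hsum : ∀ u ∈ D, ∑ x, u x = 0)
    (hphi : ∀ u ∈ D, ∑ x, u x * log (u x) = 0) {x₀ : X} {v : X → ℝ} (hv : v ∈ D)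
    (hx₀ : v x₀ ≠ 0) : ∃ y ≠ x₀, ProportionalAt D y x₀ := by
  by_contra! hno
  let coord : X → Module.Dual ℝ D := fun y => (LinearMap.proj y).comp D.subtype
  -- `w` generic: among the points where `w ≠ 0`, `v - (v x₀ / w x₀) • w` vanishes only at `x₀`
  obtain ⟨⟨w, hwD⟩, hw⟩ := Module.Dual.exists_forall_apply_ne_zero
    (fun y => if y = x₀ then coord x₀ else v y • coord x₀ - v x₀ • coord y)
  have hwx₀ : w x₀ ≠ 0 := by
    have hcoord : coord x₀ ≠ 0 := fun h => hx₀ (LinearMap.congr_fun h ⟨v, hv⟩)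
    simpa [coord] using hw x₀ (by simpa using hcoord)
  have hzeros : ∀ y ∈ univ.filter fun y => w y ≠ 0 ∧ v y + -v x₀ / w x₀ * w y = 0,
      y = x₀ := by
    intro y hy
    obtain ⟨hwy, hvy⟩ := (mem_filter.mp hy).2
    by_contra hyx
    have hcross : v y * w x₀ - v x₀ * w y = 0 := by
      field_simp at hvy
      linarith
    by_cases hf : v y • coord x₀ - v x₀ • coord y = 0
    · have hprop : ∀ u ∈ D, v y * u x₀ = v x₀ * u y := fun u hu => by
        simpa [coord, sub_eq_zero] using LinearMap.congr_fun hf ⟨u, hu⟩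
      rcases eq_or_ne (v y) 0 with hvy0 | hvy0
      · exact mul_ne_zero hx₀ hwy (by simpa [hvy0] using (hprop w hwD).symm)
      · exact hno y hyx ⟨v y / v x₀, div_ne_zero hvy0 hx₀, fun u hu => by
          field_simp
          linarith [hprop u hu]⟩
    · have := hw y (by simpa [hyx] using hf)
      simp only [hyx, if_false, LinearMap.sub_apply, LinearMap.smul_apply, smul_eq_mul] at this
      exact this (by simpa [coord] using hcross)
  have hsum_w := sum_filter_add_mul_eq_zero hsum hphi hv hwD (-v x₀ / w x₀)
  rw [sum_eq_single_of_mem x₀ (by simp [hwx₀]) fun y hy hne => absurd (hzeros y hy) hne]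
    at hsum_w
  exact hwx₀ hsum_w

lemma exists_eq_single_sub_single {w : X → ℝ} {r : X} (hr : w r = 1)
    (hcard : #{x | w x ≠ 0} ≤ 3) (hsum : ∑ x, w x = 0) (hphi : ∑ x, w x * log (w x) = 0) :
    ∃ y, w = Pi.single r 1 - Pi.single y 1 := by
  set S := univ.filter (w · ≠ 0)
  have hrS : r ∈ S := by simp [S, hr]
  have hmem : ∀ x ∈ S.erase r, x ≠ r ∧ w x ≠ 0 := fun x hx => by simpa [S] using hx
  have hsum' : ∑ x ∈ S.erase r, w x = -1 := by
    rw [← sum_filter_ne_zero, ← add_sum_erase _ _ hrS, hr] at hsum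
    linarith
  have hphi' : ∑ x ∈ S.erase r, w x * log (w x) = 0 := by
    rwa [← sum_filter_of_ne fun x _ h => left_ne_zero_of_mul h, ← add_sum_erase _ _ hrS, hr,
      log_one, mul_zero, zero_add] at hphi
  have hcard' : #(S.erase r) ≤ 2 := by
    rw [card_erase_of_mem hrS]
    omega
  interval_cases h : #(S.erase r)
  · simp [card_eq_zero.mp h] at hsum'
  · obtain ⟨y, hy⟩ := card_eq_one.mp h
    have hyr := (hmem y (by simp [hy])).1
    refine ⟨y, funext fun x => ?_⟩
    by_cases hxr : x = r
    · simp [hxr, hr, hyr.symm]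
    by_cases hxy : x = y
    · simpa [hxy, hyr, hy] using hsum'
    have : x ∉ S := fun hx => hxy (by simpa [hy] using mem_erase.mpr ⟨hxr, hx⟩)
    simpa [hxr, hxy, S] using this
  · obtain ⟨y, z, hyz, hyz'⟩ := card_eq_two.mp h
    rw [hyz', sum_pair hyz] at hsum' hphi'
    exact absurd hphi' (mul_log_add_mul_log_ne_zero (hmem y (by simp [hyz'])).2
      (hmem z (by simp [hyz'])).2 hsum')

noncomputable def underlineFinset (D : Submodule ℝ (X → ℝ)) : Finset X :=
  (underlineSet (D : Set (X → ℝ))).toFinset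

lemma mem_underlineFinset {x : X} : x ∈ underlineFinset D ↔ ∃ u ∈ D, u x ≠ 0 :=
  Set.mem_toFinset

lemma eq_zero_of_forall_classRep_eq_zero {u : X → ℝ} (hu : u ∈ D)
    (h : ∀ r ∈ (underlineFinset D).image (classRep D), u r = 0) : u = 0 := by
  refine funext fun x => by_contra fun hx => hx ?_
  obtain ⟨c, -, hc⟩ := proportionalAt_classRep (D := D) x
  rw [Pi.zero_apply, hc u hu,
    h _ (mem_image_of_mem _ (mem_underlineFinset.mpr ⟨u, hu, hx⟩)), mul_zero]

lemma two_le_card_filter_classRep (hsum : ∀ u ∈ D, ∑ x, u x = 0)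
    (hphi : ∀ u ∈ D, ∑ x, u x * log (u x) = 0) {x : X} (hx : x ∈ underlineFinset D) :
    2 ≤ #((underlineFinset D).filter (classRep D · = classRep D x)) := by
  obtain ⟨u, hu, hux⟩ := mem_underlineFinset.mp hx
  obtain ⟨y, hyx, c, hc, hy⟩ := exists_ne_proportionalAt hsum hphi hu hux
  refine one_lt_card.mpr ⟨x, by simp [hx], y, mem_filter.mpr ⟨?_, ?_⟩, hyx.symm⟩
  · exact mem_underlineFinset.mpr ⟨u, hu, by rw [hy u hu]; exact mul_ne_zero hc hux⟩
  · exact classRep_eq_of_proportionalAt ⟨c, hc, hy⟩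

lemma le_span_single_sub_single (hsum : ∀ u ∈ D, ∑ x, u x = 0)
    (hphi : ∀ u ∈ D, ∑ x, u x * log (u x) = 0)
    (hdim : Fintype.card X ≤ 2 * Module.finrank ℝ D + 1) :
    D ≤ Submodule.span ℝ
      ((D : Set (X → ℝ)) ∩ Set.range fun p : X × X => Pi.single p.1 1 - Pi.single p.2 1) := by
  set S := underlineFinset D
  set R := S.image (classRep D)
  set fiber := fun r => S.filter (classRep D · = r)
  have hR : ∀ u ∈ D, (∀ r ∈ R, u r = 0) → u = 0 := fun u hu =>
    eq_zero_of_forall_classRep_eq_zero hu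
  have hfiber : ∀ r ∈ R, 2 ≤ #(fiber r) := by
    simpa [R] using fun x hx => two_le_card_filter_classRep hsum hphi hx
  have hcount : #S = ∑ r ∈ R, #(fiber r) :=
    card_eq_sum_card_fiberwise fun x hx => mem_image_of_mem _ hx
  have hlow : #R * 2 ≤ ∑ r ∈ R, #(fiber r) := by
    simpa using card_nsmul_le_sum R (fun r => #(fiber r)) 2 hfiber
  have := card_le_univ S
  have := finrank_le_card_of_forall_eq_zero hR
  have hcardR : #R ≤ Module.finrank ℝ D := by omega
  refine le_span_of_forall_exists_eqOn_single hR Set.inter_subset_left fun r hr => ?_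
  obtain ⟨w, hwD, hw⟩ := exists_mem_eqOn_single hR hcardR hr
  have hsupp : univ.filter (w · ≠ 0) ⊆ fiber r := by
    intro x hx
    have hwx : w x ≠ 0 := (mem_filter.mp hx).2
    have hxS : x ∈ S := mem_underlineFinset.mpr ⟨w, hwD, hwx⟩
    refine mem_filter.mpr ⟨hxS, by_contra fun hne => hwx ?_⟩
    obtain ⟨c, -, hc⟩ := proportionalAt_classRep (D := D) x
    rw [hc w hwD, hw _ (mem_image_of_mem _ hxS), Pi.single_eq_of_ne hne, mul_zero]
  obtain ⟨y, rfl⟩ := exists_eq_single_sub_single (by simpa using hw r hr)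
    ((card_le_card hsupp).trans (le_three_of_two_le_of_sum_le hfiber (by omega) hr))
    (hsum _ hwD) (hphi _ hwD)
  exact ⟨_, ⟨hwD, (r, y), rfl⟩, hw⟩

end VanishingEntropy

section ExponentialFamily

variable {X : Type*} [Fintype X]

lemma log_mem_of_uniform_mem {ν : X → ℝ} {T : Submodule ℝ (X → ℝ)} (hν : ∀ x, 0 < ν x)
    (h1 : (fun _ => (1 : ℝ)) ∈ T)
    (hunif : (fun _ : X => (Fintype.card X : ℝ)⁻¹) ∈ expFam ν T) :
    (fun x => log (ν x)) ∈ T := by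
  have heq : (fun x => log (ν x)) = (-log (Fintype.card X)) • (fun _ => (1 : ℝ)) -
      fun x => log ((Fintype.card X : ℝ)⁻¹ / ν x) := by
    funext x
    have : (0 : ℝ) < Fintype.card X := Nat.cast_pos.mpr (Fintype.card_pos_iff.mpr ⟨x⟩)
    simp only [Pi.sub_apply, Pi.smul_apply, smul_eq_mul, mul_one]
    rw [log_div (by positivity) (hν x).ne', log_inv]
    ring
  rw [heq]
  exact T.sub_mem (T.smul_mem _ h1) hunif.2.2

lemma expFam_eq_of_log_mem {ν : X → ℝ} {T : Submodule ℝ (X → ℝ)} (hν : ∀ x, 0 < ν x)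
    (hlogν : (fun x => log (ν x)) ∈ T) :
    expFam ν T = {P | (∀ x, 0 < P x) ∧ ∑ x, P x = 1 ∧ (fun x => log (P x)) ∈ T} := by
  ext P
  refine and_congr_right fun hP => and_congr_right fun _ => ?_
  have heq : (fun x => log (P x / ν x)) = (fun x => log (P x)) - fun x => log (ν x) :=
    funext fun x => log_div (hP x).ne' (hν x).ne'
  rw [heq, T.sub_mem_iff_left hlogν]

lemma setOf_log_mem_eq_partExpFam {T : Submodule ℝ (X → ℝ)}
    (hspan : normalSpace T ≤ Submodule.span ℝ ((normalSpace T : Set (X → ℝ)) ∩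
      Set.range fun p : X × X => Pi.single p.1 1 - Pi.single p.2 1)) :
    {P | (∀ x, 0 < P x) ∧ ∑ x, P x = 1 ∧ (fun x => log (P x)) ∈ T} =
      partExpFam (BlockRel (normalSpace T)) := by
  ext P
  refine and_congr_right fun hP => and_congr_right fun _ => ?_
  have hdiff : ∀ a b, (Pi.single a 1 - Pi.single b 1) ⬝ᵥ (fun x => log (P x)) =
      log (P a) - log (P b) := fun a b => by simp [sub_dotProduct]
  constructor
  · intro hlog a b hab
    have := mem_iff_forall_normalSpace.mp hlog _ hab
    rw [hdiff, sub_eq_zero] at this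
    exact log_injOn_pos (hP a) (hP b) this
  · intro hconst
    refine mem_iff_forall_normalSpace.mpr fun v hv => ?_
    have hv' := hspan hv
    clear hv
    induction hv' using Submodule.span_induction with
    | mem w hw =>
      obtain ⟨hwD, ⟨a, b⟩, rfl⟩ := hw
      rw [hdiff, hconst a b hwD, sub_self]
    | zero => exact zero_dotProduct _
    | add u w _ _ hu hw => rw [add_dotProduct, hu, hw, add_zero]
    | smul c w _ hw => rw [smul_dotProduct, hw, smul_zero]

end ExponentialFamily

theorem stmt9_general (X : Type*) [Fintype X]
    (ν : X → ℝ) (hν : ∀ x, 0 < ν x)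
    (T : Submodule ℝ (X → ℝ)) (h1 : (fun _ => (1 : ℝ)) ∈ T)
    (hdim : Module.finrank ℝ T = (Fintype.card X + 1) / 2)
    (hmax : maxDiv (expFam ν T) = ((Real.log 2 : ℝ) : EReal))
    (hunif : (fun _ : X => ((Fintype.card X : ℝ))⁻¹) ∈ expFam ν T) :
    ∃ r : X → X → Prop, Equivalence r ∧ expFam ν T = partExpFam r := by
  have hE := expFam_eq_of_log_mem hν (log_mem_of_uniform_mem hν h1 hunif)
  set D := normalSpace T
  have hsum : ∀ v ∈ D, ∑ x, v x = 0 := fun v hv => by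
    simpa [dotProduct] using mem_normalSpace.mp hv _ h1
  have hphi : ∀ v ∈ D, ∑ x, v x * log (v x) = 0 := fun v hv =>
    sum_mul_log_eq_zero_of_maxDiv_le (fun Q hQ => ⟨hQ.1, hQ.2.1⟩) hmax.le (hsum v hv)
      fun Q hQ => by
        rw [hE] at hQ
        simpa [dotProduct, mul_comm] using mem_normalSpace.mp hv _ hQ.2.2
  have hdimD : Fintype.card X ≤ 2 * Module.finrank ℝ D + 1 := by
    rw [finrank_normalSpace, hdim]
    omega
  exact ⟨BlockRel D, blockRel_equivalence D,
    hE.trans (setOf_log_mem_eq_partExpFam (le_span_single_sub_single hsum hphi hdimD))⟩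

/-- if `dim T = ⌈N/2⌉`, `sup_P inf_{Q ∈ E} D(P‖Q) = log 2` and `E`
contains the uniform distribution, then `E` is a partition exponential family. -/
theorem stmt9 (X : Type*) [Fintype X] [Nonempty X]
    (ν : X → ℝ) (hν : ∀ x, 0 < ν x)
    (T : Submodule ℝ (X → ℝ)) (h1 : (fun _ => (1 : ℝ)) ∈ T)
    (hdim : Module.finrank ℝ T = (Fintype.card X + 1) / 2)
    (hmax : maxDiv (expFam ν T) = ((Real.log 2 : ℝ) : EReal))
    (hunif : (fun _ : X => ((Fintype.card X : ℝ))⁻¹) ∈ expFam ν T) :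
    ∃ r : X → X → Prop, Equivalence r ∧ expFam ν T = partExpFam r :=
  stmt9_general X ν hν T h1 hdim hmax hunif
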